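/- arXiv:2501.05773 — 2 statements merged into one kernel-verified Lean document; each statement's English description precedes it below -/
import Mathlib

section
/- For a 5-element set T ⊆ [n], the coefficient r_T := -(1/p_{[n]})·(∂/∂θ)^{T̄} P_n(θ_{P_n}) satisfies r_T = b̃_T − Σ b̃_U·b̃_V, where the sum is over all unordered partitions {U,V} of T with |U|=3 and |V|=2. -/
open Finset
open scoped Classical

/-- `p̃_T = -p_{[n]∖T}/p_{[n]}`. -/
noncomputable def ptilde {n : ℕ} (p : Finset (Fin n) → ℝ) (T : Finset (Fin n)) : ℝ :=
  -p Tᶜ / p Finset.univ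

/-- The mixed partial derivative `(∂/∂θ)^{Tᶜ}` of the affine polynomial
`θ ↦ ∑_{S ⊆ [n]} p_S ∏_{i∈S} θ_i`, evaluated at `θ`. -/
noncomputable def mixedDeriv {n : ℕ} (p : Finset (Fin n) → ℝ) (T : Finset (Fin n))
    (θ : Fin n → ℝ) : ℝ :=
  ∑ U ∈ T.powerset, p (Tᶜ ∪ U) * ∏ i ∈ U, θ i

/-- `r_T = -(1/p_{[n]}) (∂/∂θ)^{T̄} P_n (θ_{P_n})` where `θ_{P_n} = (p̃₁,…,p̃ₙ)`. -/
noncomputable def rcoeff {n : ℕ} (p : Finset (Fin n) → ℝ) (T : Finset (Fin n)) : ℝ :=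
  -(1 / p Finset.univ) * mixedDeriv p T (fun i => ptilde p {i})

/-- The set partitions of `S`: families of pairwise disjoint nonempty blocks whose
union is `S`. -/
noncomputable def setPartitions {n : ℕ} (S : Finset (Fin n)) :
    Finset (Finset (Finset (Fin n))) :=
  Finset.univ.filter (fun P => (∅ ∉ P) ∧ P.sup id = S ∧
    ∀ t ∈ P, ∀ u ∈ P, t ≠ u → Disjoint t u)

/-- `b̃_S = ∑_{k=1}^{|S|} (k-1)! ∑_{partitions of S into k blocks} ∏_{blocks T} p̃_T`. -/
noncomputable def btilde {n : ℕ} (p : Finset (Fin n) → ℝ) (S : Finset (Fin n)) : ℝ :=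
  ∑ P ∈ setPartitions S, (Nat.factorial (P.card - 1) : ℝ) * ∏ t ∈ P, ptilde p t

lemma mem_setPartitions {n : ℕ} {S : Finset (Fin n)} {P : Finset (Finset (Fin n))} :
    P ∈ setPartitions S ↔ (∅ ∉ P) ∧ P.sup id = S ∧
      ∀ t ∈ P, ∀ u ∈ P, t ≠ u → Disjoint t u := by
  simp [setPartitions]

lemma block_subset {n : ℕ} {S : Finset (Fin n)} {P : Finset (Finset (Fin n))}
    (hP : P ∈ setPartitions S) {t : Finset (Fin n)} (ht : t ∈ P) : t ⊆ S := by
  have := (mem_setPartitions.1 hP).2.1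
  exact this ▸ Finset.le_sup (f := id) ht

lemma setPartitions_empty {n : ℕ} : setPartitions (∅ : Finset (Fin n)) = {∅} := by
  ext P
  simp only [mem_setPartitions, Finset.mem_singleton]
  constructor
  · rintro ⟨h0, hsup, -⟩
    ext t
    simp only [Finset.notMem_empty, iff_false]
    intro ht
    have : t ⊆ ∅ := hsup ▸ Finset.le_sup (f := id) ht
    exact h0 (by rwa [Finset.subset_empty] at this ▸ ht)
  · rintro rfl; simp

lemma setPartitions_eq_biUnion {n : ℕ} {S : Finset (Fin n)} {a : Fin n} (ha : a ∈ S) :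
    setPartitions S = (S.powerset.filter (fun A => a ∈ A)).biUnion
      (fun A => (setPartitions (S \ A)).image (insert A)) := by
  ext P
  simp only [Finset.mem_biUnion, Finset.mem_filter, Finset.mem_powerset, Finset.mem_image]
  constructor
  · intro hP
    obtain ⟨h0, hsup, hdisj⟩ := mem_setPartitions.1 hP
    have haS : a ∈ P.sup id := hsup ▸ ha
    obtain ⟨A, hA, haA⟩ := Finset.mem_sup.1 haS
    refine ⟨A, ⟨block_subset hP hA, haA⟩, P.erase A, ?_, ?_⟩
    · rw [mem_setPartitions]
      refine ⟨fun h => h0 (Finset.mem_of_mem_erase h), ?_, ?_⟩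
      · apply le_antisymm
        · intro x hx
          obtain ⟨t, ht, hxt⟩ := Finset.mem_sup.1 hx
          have htP := Finset.mem_of_mem_erase ht
          have htA : t ≠ A := Finset.ne_of_mem_erase ht
          refine Finset.mem_sdiff.2 ⟨block_subset hP htP hxt, fun hxA => ?_⟩
          exact Finset.notMem_empty x (by simpa using (hdisj t htP A hA htA).le_bot (Finset.mem_inter.2 ⟨hxt, hxA⟩))
        · intro x hx
          obtain ⟨hxS, hxA⟩ := Finset.mem_sdiff.1 hx
          obtain ⟨t, ht, hxt⟩ := Finset.mem_sup.1 (hsup ▸ hxS : x ∈ P.sup id)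
          exact Finset.mem_sup.2 ⟨t, Finset.mem_erase.2 ⟨fun h => hxA (h ▸ hxt), ht⟩, hxt⟩
      · intro t ht u hu htu
        exact hdisj t (Finset.mem_of_mem_erase ht) u (Finset.mem_of_mem_erase hu) htu
    · exact Finset.insert_erase hA
  · rintro ⟨A, ⟨hAS, haA⟩, Q, hQ, rfl⟩
    obtain ⟨h0, hsup, hdisj⟩ := mem_setPartitions.1 hQ
    have hQblock : ∀ t ∈ Q, t ⊆ S \ A := fun t ht => block_subset hQ ht
    have hAQ : ∀ t ∈ Q, Disjoint A t := by
      intro t ht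
      exact Finset.disjoint_right.2 fun x hxt hxA =>
        (Finset.mem_sdiff.1 (hQblock t ht hxt)).2 hxA
    rw [mem_setPartitions]
    refine ⟨?_, ?_, ?_⟩
    · simp only [Finset.mem_insert, not_or]
      exact ⟨fun h => Finset.notMem_empty a (h ▸ haA), h0⟩
    · rw [Finset.sup_insert, hsup]
      simpa [id] using (Finset.union_sdiff_of_subset hAS)
    · intro t ht u hu htu
      rcases Finset.mem_insert.1 ht with rfl | ht'
      · rcases Finset.mem_insert.1 hu with rfl | hu'
        · exact absurd rfl htu
        · exact hAQ u hu'
      · rcases Finset.mem_insert.1 hu with rfl | hu'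
        · exact (hAQ t ht').symm
        · exact hdisj t ht' u hu' htu

def myPartsF : ℕ → Finset (Fin 5) → Finset (Finset (Finset (Fin 5)))
  | 0, _ => {∅}
  | (k+1), S =>
    if h : S.Nonempty then
      (S.powerset.filter (fun A => S.min' h ∈ A)).biUnion
        (fun A => (myPartsF k (S \ A)).image (insert A))
    else {∅}

lemma setPartitions_eq_myPartsF : ∀ (k : ℕ) (S : Finset (Fin 5)), S.card ≤ k →
    setPartitions S = myPartsF k S := by
  intro k
  induction k with
  | zero =>
    intro S hS
    rw [Nat.le_zero, Finset.card_eq_zero] at hS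
    subst hS
    simpa [myPartsF] using setPartitions_empty
  | succ k ih =>
    intro S hS
    by_cases h : S.Nonempty
    · rw [setPartitions_eq_biUnion (S.min'_mem h), myPartsF, dif_pos h]
      apply Finset.biUnion_congr rfl
      intro A hA
      simp only [Finset.mem_filter, Finset.mem_powerset] at hA
      congr 1
      apply ih
      have hAne : A.Nonempty := ⟨_, hA.2⟩
      have : (S \ A).card < S.card := by
        apply Finset.card_lt_card
        exact Finset.sdiff_ssubset hA.1 hAne
      omega
    · rw [Finset.not_nonempty_iff_eq_empty] at h
      subst h
      simpa [myPartsF] using setPartitions_empty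

lemma rcoeff_eq {n : ℕ} (p : Finset (Fin n) → ℝ) (T : Finset (Fin n)) :
    rcoeff p T = ∑ U ∈ T.powerset, ptilde p (T \ U) * ∏ i ∈ U, ptilde p {i} := by
  rw [rcoeff, mixedDeriv, Finset.mul_sum]
  refine Finset.sum_congr rfl fun U hU => ?_
  have hc : (T \ U)ᶜ = Tᶜ ∪ U := by
    ext x
    simp only [Finset.mem_compl, Finset.mem_sdiff, Finset.mem_union]
    tauto
  rw [ptilde, hc]
  ring

lemma filter32 {n : ℕ} (p : Finset (Fin n) → ℝ) (T : Finset (Fin n)) (hT : T.card = 5) :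
    ∑ P ∈ (setPartitions T).filter
        (fun P => ∃ U V : Finset (Fin n), P = {U, V} ∧ U.card = 3 ∧ V.card = 2),
      ∏ t ∈ P, btilde p t
    = ∑ U ∈ T.powerset.filter (fun U => U.card = 3), btilde p U * btilde p (T \ U) := by
  symm
  refine Finset.sum_bij (i := fun U _ => ({U, T \ U} : Finset (Finset (Fin n))))
    ?hi ?inj ?surj ?h
  case hi =>
    intro U hU
    simp only [Finset.mem_filter, Finset.mem_powerset] at hU
    obtain ⟨hUT, hU3⟩ := hU
    have hc2 : (T \ U).card = 2 := by rw [Finset.card_sdiff_of_subset hUT, hT, hU3]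
    refine Finset.mem_filter.2 ⟨mem_setPartitions.2 ⟨?_, ?_, ?_⟩, U, T \ U, rfl, hU3, hc2⟩
    · simp only [Finset.mem_insert, Finset.mem_singleton]
      rintro (h | h)
      · rw [← h] at hU3; simp at hU3
      · rw [← h] at hc2; simp at hc2
    · rw [Finset.sup_insert, Finset.sup_singleton, id]
      exact Finset.union_sdiff_of_subset hUT
    · intro t ht u hu htu
      rcases Finset.mem_insert.1 ht with rfl | ht' <;>
        rcases Finset.mem_insert.1 hu with rfl | hu'
      · exact absurd rfl htu
      · rw [Finset.mem_singleton] at hu'; subst hu'; exact Finset.disjoint_sdiff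
      · rw [Finset.mem_singleton] at ht'; subst ht'; exact Finset.disjoint_sdiff.symm
      · rw [Finset.mem_singleton] at ht' hu'; subst ht'; subst hu'; exact absurd rfl htu
  case inj =>
    intro U1 h1 U2 h2 heq
    simp only [Finset.mem_filter, Finset.mem_powerset] at h1 h2
    have heq' : ({U1, T \ U1} : Finset (Finset (Fin n))) = {U2, T \ U2} := heq
    have : U1 ∈ ({U2, T \ U2} : Finset (Finset (Fin n))) := heq' ▸ Finset.mem_insert_self _ _
    rcases Finset.mem_insert.1 this with h | h
    · exact h
    · rw [Finset.mem_singleton] at h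
      have : U1.card = (T \ U2).card := by rw [h]
      rw [h1.2, Finset.card_sdiff_of_subset h2.1, hT, h2.2] at this
      omega
  case surj =>
    intro P hP
    simp only [Finset.mem_filter] at hP
    obtain ⟨hPm, U, V, rfl, hU3, hV2⟩ := hP
    have hUP : U ∈ ({U, V} : Finset (Finset (Fin n))) := Finset.mem_insert_self _ _
    have hVP : V ∈ ({U, V} : Finset (Finset (Fin n))) := by simp
    have hUT : U ⊆ T := block_subset hPm hUP
    have hUV : U ≠ V := by intro h; rw [h, hV2] at hU3; omega
    have hdisj := (mem_setPartitions.1 hPm).2.2 U hUP V hVP hUV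
    have hVT : V ⊆ T := block_subset hPm hVP
    have hVsub : V ⊆ T \ U := fun x hx => Finset.mem_sdiff.2
      ⟨hVT hx, fun hxU => (Finset.disjoint_left.1 hdisj.symm) hx hxU⟩
    have hVeq : V = T \ U := by
      apply Finset.eq_of_subset_of_card_le hVsub
      rw [Finset.card_sdiff_of_subset hUT, hT, hU3, hV2]
    refine ⟨U, Finset.mem_filter.2 ⟨Finset.mem_powerset.2 hUT, hU3⟩, ?_⟩
    rw [hVeq]
  case h =>
    intro U hU
    simp only [Finset.mem_filter, Finset.mem_powerset] at hU
    have hc2 : (T \ U).card = 2 := by rw [Finset.card_sdiff_of_subset hU.1, hT, hU.2]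
    have hne : U ≠ T \ U := by intro h; rw [← h] at hc2; rw [hU.2] at hc2; omega
    rw [Finset.prod_pair hne]

lemma powerset_image' {n : ℕ} (f : Fin 5 → Fin n) (S : Finset (Fin 5)) :
    (S.image f).powerset = S.powerset.image (Finset.image f) := by
  ext U
  rw [Finset.mem_powerset, Finset.subset_image_iff]
  simp only [Finset.mem_image, Finset.mem_powerset]
lemma image_sup' {α β : Type*} [DecidableEq α] [DecidableEq β] (f : α → β)
    (Q : Finset (Finset α)) : (Q.sup id).image f = Q.sup (fun t => t.image f) := by
  induction Q using Finset.induction with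
  | empty => simp
  | insert h ih => simp [Finset.image_union, *]

lemma setPartitions_image {n : ℕ} (f : Fin 5 → Fin n) (hf : Function.Injective f)
    (S : Finset (Fin 5)) :
    setPartitions (S.image f) =
      (setPartitions S).image (fun Q => Q.image (fun t => t.image f)) := by
  have himg : Function.Injective (Finset.image f) := Finset.image_injective hf
  ext P
  simp only [Finset.mem_image]
  constructor
  · intro hP
    obtain ⟨h0, hsup, hdisj⟩ := mem_setPartitions.1 hP
    have hpre : ∀ t ∈ P, ((t.preimage f hf.injOn).image f) = t := by
      intro t ht
      rw [Finset.image_preimage]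
      apply Finset.filter_true_of_mem
      intro x hx
      have := block_subset hP ht hx
      simp only [Finset.mem_image] at this
      obtain ⟨y, -, hy⟩ := this
      exact ⟨y, hy⟩
    refine ⟨P.image (fun t => t.preimage f hf.injOn), ?_, ?_⟩
    · rw [mem_setPartitions]
      refine ⟨?_, ?_, ?_⟩
      · simp only [Finset.mem_image]
        rintro ⟨t, ht, hemp⟩
        have ht' : t = ∅ := by
          calc t = (t.preimage f hf.injOn).image f := (hpre t ht).symm
          _ = ∅ := by rw [hemp, Finset.image_empty]
        exact h0 (ht' ▸ ht)
      · apply himg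
        rw [image_sup' f, Finset.sup_image, ← hsup]
        apply Finset.sup_congr rfl
        intro t ht
        exact hpre t ht
      · simp only [Finset.mem_image, forall_exists_index, and_imp]
        rintro t' t ht rfl u' u hu rfl htu
        have hne : t ≠ u := fun h => htu (h ▸ rfl)
        have := hdisj t ht u hu hne
        rw [← hpre t ht, ← hpre u hu, Finset.disjoint_image hf] at this
        exact this
    · conv_rhs => rw [← Finset.image_id (s := P)]
      rw [Finset.image_image]
      apply Finset.image_congr
      intro t ht
      exact hpre t ht
  · rintro ⟨Q, hQ, rfl⟩
    obtain ⟨h0, hsup, hdisj⟩ := mem_setPartitions.1 hQ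
    rw [mem_setPartitions]
    refine ⟨?_, ?_, ?_⟩
    · simp only [Finset.mem_image, not_exists]
      rintro t ⟨ht, hemp⟩
      rw [Finset.image_eq_empty] at hemp
      exact h0 (hemp ▸ ht)
    · rw [← hsup, image_sup' f, Finset.sup_image]
      rfl
    · simp only [Finset.mem_image, forall_exists_index, and_imp]
      rintro t' t ht rfl u' u hu rfl htu
      have hne : t ≠ u := fun h => htu (h ▸ rfl)
      exact (Finset.disjoint_image hf).2 (hdisj t ht u hu hne)

noncomputable def bt5 (x : Finset (Fin 5) → ℝ) (S : Finset (Fin 5)) : ℝ :=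
  ∑ P ∈ setPartitions S, (Nat.factorial (P.card - 1) : ℝ) * ∏ t ∈ P, x t

lemma btilde_image {n : ℕ} (f : Fin 5 → Fin n) (hf : Function.Injective f)
    (p : Finset (Fin n) → ℝ) (S : Finset (Fin 5)) :
    btilde p (S.image f) = bt5 (fun s => ptilde p (s.image f)) S := by
  rw [btilde, bt5, setPartitions_image f hf S]
  rw [Finset.sum_image
    (fun Q1 _ Q2 _ h => Finset.image_injective (Finset.image_injective hf) h)]
  refine Finset.sum_congr rfl fun Q hQ => ?_
  rw [Finset.card_image_of_injective _ (Finset.image_injective hf)]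
  congr 1
  rw [Finset.prod_image (fun t1 _ t2 _ h => Finset.image_injective hf h)]

set_option maxRecDepth 100000
set_option maxHeartbeats 1600000

theorem core5 (x : Finset (Fin 5) → ℝ) (hx : x ∅ = -1) :
    ∑ U ∈ (Finset.univ : Finset (Fin 5)).powerset, x (Finset.univ \ U) * ∏ i ∈ U, x {i}
      = bt5 x Finset.univ -
        ∑ U ∈ (Finset.univ : Finset (Fin 5)).powerset.filter (fun U => U.card = 3),
          bt5 x U * bt5 x (Finset.univ \ U) := by
  have hall : ∀ S : Finset (Fin 5), setPartitions S = myPartsF 5 S := fun S =>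
    setPartitions_eq_myPartsF 5 S (by simpa using Finset.card_le_univ S)
  have h10 : (Finset.univ : Finset (Fin 5)).powerset.filter (fun U => U.card = 3) = ({{0, 1, 2}, {0, 1, 3}, {0, 1, 4}, {0, 2, 3}, {0, 2, 4}, {0, 3, 4}, {1, 2, 3}, {1, 2, 4}, {1, 3, 4}, {2, 3, 4}} : Finset (Finset (Fin 5))) := by
    ext U
    simp only [Finset.mem_filter]
    revert U
    decide
  have hd0 : Finset.univ \ (∅ : Finset (Fin 5)) = ({0, 1, 2, 3, 4} : Finset (Fin 5)) := by decide
  have hd1 : Finset.univ \ ({0} : Finset (Fin 5)) = ({1, 2, 3, 4} : Finset (Fin 5)) := by decide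
  have hd2 : Finset.univ \ ({1} : Finset (Fin 5)) = ({0, 2, 3, 4} : Finset (Fin 5)) := by decide
  have hd3 : Finset.univ \ ({2} : Finset (Fin 5)) = ({0, 1, 3, 4} : Finset (Fin 5)) := by decide
  have hd4 : Finset.univ \ ({3} : Finset (Fin 5)) = ({0, 1, 2, 4} : Finset (Fin 5)) := by decide
  have hd5 : Finset.univ \ ({4} : Finset (Fin 5)) = ({0, 1, 2, 3} : Finset (Fin 5)) := by decide
  have hd6 : Finset.univ \ ({0, 1} : Finset (Fin 5)) = ({2, 3, 4} : Finset (Fin 5)) := by decide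
  have hd7 : Finset.univ \ ({0, 2} : Finset (Fin 5)) = ({1, 3, 4} : Finset (Fin 5)) := by decide
  have hd8 : Finset.univ \ ({0, 3} : Finset (Fin 5)) = ({1, 2, 4} : Finset (Fin 5)) := by decide
  have hd9 : Finset.univ \ ({0, 4} : Finset (Fin 5)) = ({1, 2, 3} : Finset (Fin 5)) := by decide
  have hd10 : Finset.univ \ ({1, 2} : Finset (Fin 5)) = ({0, 3, 4} : Finset (Fin 5)) := by decide
  have hd11 : Finset.univ \ ({1, 3} : Finset (Fin 5)) = ({0, 2, 4} : Finset (Fin 5)) := by decide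
  have hd12 : Finset.univ \ ({1, 4} : Finset (Fin 5)) = ({0, 2, 3} : Finset (Fin 5)) := by decide
  have hd13 : Finset.univ \ ({2, 3} : Finset (Fin 5)) = ({0, 1, 4} : Finset (Fin 5)) := by decide
  have hd14 : Finset.univ \ ({2, 4} : Finset (Fin 5)) = ({0, 1, 3} : Finset (Fin 5)) := by decide
  have hd15 : Finset.univ \ ({3, 4} : Finset (Fin 5)) = ({0, 1, 2} : Finset (Fin 5)) := by decide
  have hd16 : Finset.univ \ ({0, 1, 2} : Finset (Fin 5)) = ({3, 4} : Finset (Fin 5)) := by decide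
  have hd17 : Finset.univ \ ({0, 1, 3} : Finset (Fin 5)) = ({2, 4} : Finset (Fin 5)) := by decide
  have hd18 : Finset.univ \ ({0, 1, 4} : Finset (Fin 5)) = ({2, 3} : Finset (Fin 5)) := by decide
  have hd19 : Finset.univ \ ({0, 2, 3} : Finset (Fin 5)) = ({1, 4} : Finset (Fin 5)) := by decide
  have hd20 : Finset.univ \ ({0, 2, 4} : Finset (Fin 5)) = ({1, 3} : Finset (Fin 5)) := by decide
  have hd21 : Finset.univ \ ({0, 3, 4} : Finset (Fin 5)) = ({1, 2} : Finset (Fin 5)) := by decide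
  have hd22 : Finset.univ \ ({1, 2, 3} : Finset (Fin 5)) = ({0, 4} : Finset (Fin 5)) := by decide
  have hd23 : Finset.univ \ ({1, 2, 4} : Finset (Fin 5)) = ({0, 3} : Finset (Fin 5)) := by decide
  have hd24 : Finset.univ \ ({1, 3, 4} : Finset (Fin 5)) = ({0, 2} : Finset (Fin 5)) := by decide
  have hd25 : Finset.univ \ ({2, 3, 4} : Finset (Fin 5)) = ({0, 1} : Finset (Fin 5)) := by decide
  have hd26 : Finset.univ \ ({0, 1, 2, 3} : Finset (Fin 5)) = ({4} : Finset (Fin 5)) := by decide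
  have hd27 : Finset.univ \ ({0, 1, 2, 4} : Finset (Fin 5)) = ({3} : Finset (Fin 5)) := by decide
  have hd28 : Finset.univ \ ({0, 1, 3, 4} : Finset (Fin 5)) = ({2} : Finset (Fin 5)) := by decide
  have hd29 : Finset.univ \ ({0, 2, 3, 4} : Finset (Fin 5)) = ({1} : Finset (Fin 5)) := by decide
  have hd30 : Finset.univ \ ({1, 2, 3, 4} : Finset (Fin 5)) = ({0} : Finset (Fin 5)) := by decide
  have hd31 : Finset.univ \ ({0, 1, 2, 3, 4} : Finset (Fin 5)) = (∅ : Finset (Fin 5)) := by decide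
  have hb_univ : bt5 x Finset.univ = 24 * (x {0} * x {1} * x {2} * x {3} * x {4}) + 6 * (x {0} * x {1} * x {2} * x {3, 4}) + 6 * (x {0} * x {1} * x {2, 3} * x {4}) + 6 * (x {0} * x {1} * x {2, 4} * x {3}) + 2 * (x {0} * x {1} * x {2, 3, 4}) + 6 * (x {0} * x {1, 2} * x {3} * x {4}) + 2 * (x {0} * x {1, 2} * x {3, 4}) + 6 * (x {0} * x {1, 3} * x {2} * x {4}) + 2 * (x {0} * x {1, 3} * x {2, 4}) + 6 * (x {0} * x {1, 4} * x {2} * x {3}) + 2 * (x {0} * x {1, 4} * x {2, 3}) + 2 * (x {0} * x {1, 2, 3} * x {4}) + 2 * (x {0} * x {1, 2, 4} * x {3}) + 2 * (x {0} * x {1, 3, 4} * x {2}) + 1 * (x {0} * x {1, 2, 3, 4}) + 6 * (x {0, 1} * x {2} * x {3} * x {4}) + 2 * (x {0, 1} * x {2} * x {3, 4}) + 2 * (x {0, 1} * x {2, 3} * x {4}) + 2 * (x {0, 1} * x {2, 4} * x {3}) + 1 * (x {0, 1} * x {2, 3, 4}) + 6 * (x {0, 2} * x {1} * x {3} * x {4})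 + 2 * (x {0, 2} * x {1} * x {3, 4}) + 2 * (x {0, 2} * x {1, 3} * x {4}) + 2 * (x {0, 2} * x {1, 4} * x {3}) + 1 * (x {0, 2} * x {1, 3, 4}) + 6 * (x {0, 3} * x {1} * x {2} * x {4}) + 2 * (x {0, 3} * x {1} * x {2, 4}) + 2 * (x {0, 3} * x {1, 2} * x {4}) + 2 * (x {0, 3} * x {1, 4} * x {2}) + 1 * (x {0, 3} * x {1, 2, 4}) + 6 * (x {0, 4} * x {1} * x {2} * x {3}) + 2 * (x {0, 4} * x {1} * x {2, 3}) + 2 * (x {0, 4} * x {1, 2} * x {3}) + 2 * (x {0, 4} * x {1, 3} * x {2}) + 1 * (x {0, 4} * x {1, 2, 3}) + 2 * (x {0, 1, 2} * x {3} * x {4}) + 1 * (x {0, 1, 2} * x {3, 4}) + 2 * (x {0, 1, 3} * x {2} * x {4}) + 1 * (x {0, 1, 3} * x {2, 4}) + 2 * (x {0, 1, 4} * x {2} * x {3}) + 1 * (x {0, 1, 4} * x {2, 3}) + 2 * (x {0, 2, 3} * x {1} * x {4}) + 1 * (x {0, 2, 3} * x {1, 4}) + 2 * (x {0, 2, 4}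 * x {1} * x {3}) + 1 * (x {0, 2, 4} * x {1, 3}) + 2 * (x {0, 3, 4} * x {1} * x {2}) + 1 * (x {0, 3, 4} * x {1, 2}) + 1 * (x {0, 1, 2, 3} * x {4}) + 1 * (x {0, 1, 2, 4} * x {3}) + 1 * (x {0, 1, 3, 4} * x {2}) + 1 * (x {0, 2, 3, 4} * x {1}) + 1 * (x {0, 1, 2, 3, 4}) := by
    rw [bt5, hall, show myPartsF 5 (Finset.univ : Finset (Fin 5)) = ({{{0}, {1}, {2}, {3}, {4}}, {{0}, {1}, {2}, {3, 4}}, {{0}, {1}, {2, 3}, {4}}, {{0}, {1}, {2, 4}, {3}}, {{0}, {1}, {2, 3, 4}}, {{0}, {1, 2}, {3}, {4}}, {{0}, {1, 2}, {3, 4}}, {{0}, {1, 3}, {2}, {4}}, {{0}, {1, 3}, {2, 4}}, {{0}, {1, 4}, {2}, {3}}, {{0}, {1, 4}, {2, 3}}, {{0}, {1, 2, 3}, {4}}, {{0}, {1, 2, 4}, {3}}, {{0}, {1, 3, 4}, {2}}, {{0}, {1, 2, 3, 4}}, {{0, 1}, {2}, {3}, {4}}, {{0, 1}, {2}, {3,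 4}}, {{0, 1}, {2, 3}, {4}}, {{0, 1}, {2, 4}, {3}}, {{0, 1}, {2, 3, 4}}, {{0, 2}, {1}, {3}, {4}}, {{0, 2}, {1}, {3, 4}}, {{0, 2}, {1, 3}, {4}}, {{0, 2}, {1, 4}, {3}}, {{0, 2}, {1, 3, 4}}, {{0, 3}, {1}, {2}, {4}}, {{0, 3}, {1}, {2, 4}}, {{0, 3}, {1, 2}, {4}}, {{0, 3}, {1, 4}, {2}}, {{0, 3}, {1, 2, 4}}, {{0, 4}, {1}, {2}, {3}}, {{0, 4}, {1}, {2, 3}}, {{0, 4}, {1, 2}, {3}}, {{0, 4}, {1, 3}, {2}}, {{0, 4}, {1, 2, 3}}, {{0, 1, 2}, {3}, {4}}, {{0, 1, 2}, {3, 4}}, {{0, 1, 3}, {2}, {4}}, {{0, 1, 3}, {2, 4}}, {{0, 1, 4}, {2}, {3}}, {{0, 1, 4}, {2, 3}}, {{0, 2, 3}, {1}, {4}}, {{0, 2, 3}, {1, 4}}, {{0, 2, 4}, {1}, {3}}, {{0, 2, 4}, {1, 3}}, {{0, 3, 4}, {1}, {2}}, {{0, 3, 4}, {1, 2}}, {{0,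 1, 2, 3}, {4}}, {{0, 1, 2, 4}, {3}}, {{0, 1, 3, 4}, {2}}, {{0, 2, 3, 4}, {1}}, {{0, 1, 2, 3, 4}}} : Finset (Finset (Finset (Fin 5)))) from by decide]
    simp (config := { decide := true }) only [Finset.sum_insert, Finset.sum_singleton,
      Finset.mem_insert, Finset.mem_singleton, Finset.sum_empty, Finset.prod_insert, Finset.prod_singleton, Finset.prod_empty,
      show Nat.factorial (Finset.card ({{0}, {1}, {2}, {3}, {4}} : Finset (Finset (Fin 5))) - 1) = 24 from by decide,
      show Nat.factorial (Finset.card ({{0}, {1}, {2}, {3, 4}} : Finset (Finset (Fin 5))) - 1) = 6 from by decide,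
      show Nat.factorial (Finset.card ({{0}, {1}, {2, 3}, {4}} : Finset (Finset (Fin 5))) - 1) = 6 from by decide,
      show Nat.factorial (Finset.card ({{0}, {1}, {2, 4}, {3}} : Finset (Finset (Fin 5))) - 1) = 6 from by decide,
      show Nat.factorial (Finset.card ({{0}, {1}, {2, 3, 4}} : Finset (Finset (Fin 5))) - 1) = 2 from by decide,
      show Nat.factorial (Finset.card ({{0}, {1, 2}, {3}, {4}} : Finset (Finset (Fin 5))) - 1) = 6 from by decide,
      show Nat.factorial (Finset.card ({{0}, {1, 2}, {3, 4}} : Finset (Finset (Fin 5))) - 1) = 2 from by decide,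
      show Nat.factorial (Finset.card ({{0}, {1, 3}, {2}, {4}} : Finset (Finset (Fin 5))) - 1) = 6 from by decide,
      show Nat.factorial (Finset.card ({{0}, {1, 3}, {2, 4}} : Finset (Finset (Fin 5))) - 1) = 2 from by decide,
      show Nat.factorial (Finset.card ({{0}, {1, 4}, {2}, {3}} : Finset (Finset (Fin 5))) - 1) = 6 from by decide,
      show Nat.factorial (Finset.card ({{0}, {1, 4}, {2, 3}} : Finset (Finset (Fin 5))) - 1) = 2 from by decide,
      show Nat.factorial (Finset.card ({{0}, {1, 2, 3}, {4}} : Finset (Finset (Fin 5))) - 1) = 2 from by decide,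
      show Nat.factorial (Finset.card ({{0}, {1, 2, 4}, {3}} : Finset (Finset (Fin 5))) - 1) = 2 from by decide,
      show Nat.factorial (Finset.card ({{0}, {1, 3, 4}, {2}} : Finset (Finset (Fin 5))) - 1) = 2 from by decide,
      show Nat.factorial (Finset.card ({{0}, {1, 2, 3, 4}} : Finset (Finset (Fin 5))) - 1) = 1 from by decide,
      show Nat.factorial (Finset.card ({{0, 1}, {2}, {3}, {4}} : Finset (Finset (Fin 5))) - 1) = 6 from by decide,
      show Nat.factorial (Finset.card ({{0, 1}, {2}, {3, 4}} : Finset (Finset (Fin 5))) - 1) = 2 from by decide,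
      show Nat.factorial (Finset.card ({{0, 1}, {2, 3}, {4}} : Finset (Finset (Fin 5))) - 1) = 2 from by decide,
      show Nat.factorial (Finset.card ({{0, 1}, {2, 4}, {3}} : Finset (Finset (Fin 5))) - 1) = 2 from by decide,
      show Nat.factorial (Finset.card ({{0, 1}, {2, 3, 4}} : Finset (Finset (Fin 5))) - 1) = 1 from by decide,
      show Nat.factorial (Finset.card ({{0, 2}, {1}, {3}, {4}} : Finset (Finset (Fin 5))) - 1) = 6 from by decide,
      show Nat.factorial (Finset.card ({{0, 2}, {1}, {3, 4}} : Finset (Finset (Fin 5))) - 1) = 2 from by decide,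
      show Nat.factorial (Finset.card ({{0, 2}, {1, 3}, {4}} : Finset (Finset (Fin 5))) - 1) = 2 from by decide,
      show Nat.factorial (Finset.card ({{0, 2}, {1, 4}, {3}} : Finset (Finset (Fin 5))) - 1) = 2 from by decide,
      show Nat.factorial (Finset.card ({{0, 2}, {1, 3, 4}} : Finset (Finset (Fin 5))) - 1) = 1 from by decide,
      show Nat.factorial (Finset.card ({{0, 3}, {1}, {2}, {4}} : Finset (Finset (Fin 5))) - 1) = 6 from by decide,
      show Nat.factorial (Finset.card ({{0, 3}, {1}, {2, 4}} : Finset (Finset (Fin 5))) - 1) = 2 from by decide,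
      show Nat.factorial (Finset.card ({{0, 3}, {1, 2}, {4}} : Finset (Finset (Fin 5))) - 1) = 2 from by decide,
      show Nat.factorial (Finset.card ({{0, 3}, {1, 4}, {2}} : Finset (Finset (Fin 5))) - 1) = 2 from by decide,
      show Nat.factorial (Finset.card ({{0, 3}, {1, 2, 4}} : Finset (Finset (Fin 5))) - 1) = 1 from by decide,
      show Nat.factorial (Finset.card ({{0, 4}, {1}, {2}, {3}} : Finset (Finset (Fin 5))) - 1) = 6 from by decide,
      show Nat.factorial (Finset.card ({{0, 4}, {1}, {2, 3}} : Finset (Finset (Fin 5))) - 1) = 2 from by decide,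
      show Nat.factorial (Finset.card ({{0, 4}, {1, 2}, {3}} : Finset (Finset (Fin 5))) - 1) = 2 from by decide,
      show Nat.factorial (Finset.card ({{0, 4}, {1, 3}, {2}} : Finset (Finset (Fin 5))) - 1) = 2 from by decide,
      show Nat.factorial (Finset.card ({{0, 4}, {1, 2, 3}} : Finset (Finset (Fin 5))) - 1) = 1 from by decide,
      show Nat.factorial (Finset.card ({{0, 1, 2}, {3}, {4}} : Finset (Finset (Fin 5))) - 1) = 2 from by decide,
      show Nat.factorial (Finset.card ({{0, 1, 2}, {3, 4}} : Finset (Finset (Fin 5))) - 1) = 1 from by decide,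
      show Nat.factorial (Finset.card ({{0, 1, 3}, {2}, {4}} : Finset (Finset (Fin 5))) - 1) = 2 from by decide,
      show Nat.factorial (Finset.card ({{0, 1, 3}, {2, 4}} : Finset (Finset (Fin 5))) - 1) = 1 from by decide,
      show Nat.factorial (Finset.card ({{0, 1, 4}, {2}, {3}} : Finset (Finset (Fin 5))) - 1) = 2 from by decide,
      show Nat.factorial (Finset.card ({{0, 1, 4}, {2, 3}} : Finset (Finset (Fin 5))) - 1) = 1 from by decide,
      show Nat.factorial (Finset.card ({{0, 2, 3}, {1}, {4}} : Finset (Finset (Fin 5))) - 1) = 2 from by decide,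
      show Nat.factorial (Finset.card ({{0, 2, 3}, {1, 4}} : Finset (Finset (Fin 5))) - 1) = 1 from by decide,
      show Nat.factorial (Finset.card ({{0, 2, 4}, {1}, {3}} : Finset (Finset (Fin 5))) - 1) = 2 from by decide,
      show Nat.factorial (Finset.card ({{0, 2, 4}, {1, 3}} : Finset (Finset (Fin 5))) - 1) = 1 from by decide,
      show Nat.factorial (Finset.card ({{0, 3, 4}, {1}, {2}} : Finset (Finset (Fin 5))) - 1) = 2 from by decide,
      show Nat.factorial (Finset.card ({{0, 3, 4}, {1, 2}} : Finset (Finset (Fin 5))) - 1) = 1 from by decide,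
      show Nat.factorial (Finset.card ({{0, 1, 2, 3}, {4}} : Finset (Finset (Fin 5))) - 1) = 1 from by decide,
      show Nat.factorial (Finset.card ({{0, 1, 2, 4}, {3}} : Finset (Finset (Fin 5))) - 1) = 1 from by decide,
      show Nat.factorial (Finset.card ({{0, 1, 3, 4}, {2}} : Finset (Finset (Fin 5))) - 1) = 1 from by decide,
      show Nat.factorial (Finset.card ({{0, 2, 3, 4}, {1}} : Finset (Finset (Fin 5))) - 1) = 1 from by decide,
      show Nat.factorial (Finset.card ({{0, 1, 2, 3, 4}} : Finset (Finset (Fin 5))) - 1) = 1 from by decide]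
    push_cast
    ring
  have hb_012 : bt5 x {0, 1, 2} = 2 * (x {0} * x {1} * x {2}) + 1 * (x {0} * x {1, 2}) + 1 * (x {0, 1} * x {2}) + 1 * (x {0, 2} * x {1}) + 1 * (x {0, 1, 2}) := by
    rw [bt5, hall, show myPartsF 5 ({0, 1, 2} : Finset (Fin 5)) = ({{{0}, {1}, {2}}, {{0}, {1, 2}}, {{0, 1}, {2}}, {{0, 2}, {1}}, {{0, 1, 2}}} : Finset (Finset (Finset (Fin 5)))) from by decide]
    simp (config := { decide := true }) only [Finset.sum_insert, Finset.sum_singleton,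
      Finset.mem_insert, Finset.mem_singleton, Finset.sum_empty, Finset.prod_insert, Finset.prod_singleton, Finset.prod_empty,
      show Nat.factorial (Finset.card ({{0}, {1}, {2}} : Finset (Finset (Fin 5))) - 1) = 2 from by decide,
      show Nat.factorial (Finset.card ({{0}, {1, 2}} : Finset (Finset (Fin 5))) - 1) = 1 from by decide,
      show Nat.factorial (Finset.card ({{0, 1}, {2}} : Finset (Finset (Fin 5))) - 1) = 1 from by decide,
      show Nat.factorial (Finset.card ({{0, 2}, {1}} : Finset (Finset (Fin 5))) - 1) = 1 from by decide,
      show Nat.factorial (Finset.card ({{0, 1, 2}} : Finset (Finset (Fin 5))) - 1) = 1 from by decide]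
    push_cast
    ring
  have hb_013 : bt5 x {0, 1, 3} = 2 * (x {0} * x {1} * x {3}) + 1 * (x {0} * x {1, 3}) + 1 * (x {0, 1} * x {3}) + 1 * (x {0, 3} * x {1}) + 1 * (x {0, 1, 3}) := by
    rw [bt5, hall, show myPartsF 5 ({0, 1, 3} : Finset (Fin 5)) = ({{{0}, {1}, {3}}, {{0}, {1, 3}}, {{0, 1}, {3}}, {{0, 3}, {1}}, {{0, 1, 3}}} : Finset (Finset (Finset (Fin 5)))) from by decide]
    simp (config := { decide := true }) only [Finset.sum_insert, Finset.sum_singleton,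
      Finset.mem_insert, Finset.mem_singleton, Finset.sum_empty, Finset.prod_insert, Finset.prod_singleton, Finset.prod_empty,
      show Nat.factorial (Finset.card ({{0}, {1}, {3}} : Finset (Finset (Fin 5))) - 1) = 2 from by decide,
      show Nat.factorial (Finset.card ({{0}, {1, 3}} : Finset (Finset (Fin 5))) - 1) = 1 from by decide,
      show Nat.factorial (Finset.card ({{0, 1}, {3}} : Finset (Finset (Fin 5))) - 1) = 1 from by decide,
      show Nat.factorial (Finset.card ({{0, 3}, {1}} : Finset (Finset (Fin 5))) - 1) = 1 from by decide,
      show Nat.factorial (Finset.card ({{0, 1, 3}} : Finset (Finset (Fin 5))) - 1) = 1 from by decide]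
    push_cast
    ring
  have hb_014 : bt5 x {0, 1, 4} = 2 * (x {0} * x {1} * x {4}) + 1 * (x {0} * x {1, 4}) + 1 * (x {0, 1} * x {4}) + 1 * (x {0, 4} * x {1}) + 1 * (x {0, 1, 4}) := by
    rw [bt5, hall, show myPartsF 5 ({0, 1, 4} : Finset (Fin 5)) = ({{{0}, {1}, {4}}, {{0}, {1, 4}}, {{0, 1}, {4}}, {{0, 4}, {1}}, {{0, 1, 4}}} : Finset (Finset (Finset (Fin 5)))) from by decide]
    simp (config := { decide := true }) only [Finset.sum_insert, Finset.sum_singleton,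
      Finset.mem_insert, Finset.mem_singleton, Finset.sum_empty, Finset.prod_insert, Finset.prod_singleton, Finset.prod_empty,
      show Nat.factorial (Finset.card ({{0}, {1}, {4}} : Finset (Finset (Fin 5))) - 1) = 2 from by decide,
      show Nat.factorial (Finset.card ({{0}, {1, 4}} : Finset (Finset (Fin 5))) - 1) = 1 from by decide,
      show Nat.factorial (Finset.card ({{0, 1}, {4}} : Finset (Finset (Fin 5))) - 1) = 1 from by decide,
      show Nat.factorial (Finset.card ({{0, 4}, {1}} : Finset (Finset (Fin 5))) - 1) = 1 from by decide,
      show Nat.factorial (Finset.card ({{0, 1, 4}} : Finset (Finset (Fin 5))) - 1) = 1 from by decide]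
    push_cast
    ring
  have hb_023 : bt5 x {0, 2, 3} = 2 * (x {0} * x {2} * x {3}) + 1 * (x {0} * x {2, 3}) + 1 * (x {0, 2} * x {3}) + 1 * (x {0, 3} * x {2}) + 1 * (x {0, 2, 3}) := by
    rw [bt5, hall, show myPartsF 5 ({0, 2, 3} : Finset (Fin 5)) = ({{{0}, {2}, {3}}, {{0}, {2, 3}}, {{0, 2}, {3}}, {{0, 3}, {2}}, {{0, 2, 3}}} : Finset (Finset (Finset (Fin 5)))) from by decide]
    simp (config := { decide := true }) only [Finset.sum_insert, Finset.sum_singleton,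
      Finset.mem_insert, Finset.mem_singleton, Finset.sum_empty, Finset.prod_insert, Finset.prod_singleton, Finset.prod_empty,
      show Nat.factorial (Finset.card ({{0}, {2}, {3}} : Finset (Finset (Fin 5))) - 1) = 2 from by decide,
      show Nat.factorial (Finset.card ({{0}, {2, 3}} : Finset (Finset (Fin 5))) - 1) = 1 from by decide,
      show Nat.factorial (Finset.card ({{0, 2}, {3}} : Finset (Finset (Fin 5))) - 1) = 1 from by decide,
      show Nat.factorial (Finset.card ({{0, 3}, {2}} : Finset (Finset (Fin 5))) - 1) = 1 from by decide,
      show Nat.factorial (Finset.card ({{0, 2, 3}} : Finset (Finset (Fin 5))) - 1) = 1 from by decide]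
    push_cast
    ring
  have hb_024 : bt5 x {0, 2, 4} = 2 * (x {0} * x {2} * x {4}) + 1 * (x {0} * x {2, 4}) + 1 * (x {0, 2} * x {4}) + 1 * (x {0, 4} * x {2}) + 1 * (x {0, 2, 4}) := by
    rw [bt5, hall, show myPartsF 5 ({0, 2, 4} : Finset (Fin 5)) = ({{{0}, {2}, {4}}, {{0}, {2, 4}}, {{0, 2}, {4}}, {{0, 4}, {2}}, {{0, 2, 4}}} : Finset (Finset (Finset (Fin 5)))) from by decide]
    simp (config := { decide := true }) only [Finset.sum_insert, Finset.sum_singleton,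
      Finset.mem_insert, Finset.mem_singleton, Finset.sum_empty, Finset.prod_insert, Finset.prod_singleton, Finset.prod_empty,
      show Nat.factorial (Finset.card ({{0}, {2}, {4}} : Finset (Finset (Fin 5))) - 1) = 2 from by decide,
      show Nat.factorial (Finset.card ({{0}, {2, 4}} : Finset (Finset (Fin 5))) - 1) = 1 from by decide,
      show Nat.factorial (Finset.card ({{0, 2}, {4}} : Finset (Finset (Fin 5))) - 1) = 1 from by decide,
      show Nat.factorial (Finset.card ({{0, 4}, {2}} : Finset (Finset (Fin 5))) - 1) = 1 from by decide,
      show Nat.factorial (Finset.card ({{0, 2, 4}} : Finset (Finset (Fin 5))) - 1) = 1 from by decide]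
    push_cast
    ring
  have hb_034 : bt5 x {0, 3, 4} = 2 * (x {0} * x {3} * x {4}) + 1 * (x {0} * x {3, 4}) + 1 * (x {0, 3} * x {4}) + 1 * (x {0, 4} * x {3}) + 1 * (x {0, 3, 4}) := by
    rw [bt5, hall, show myPartsF 5 ({0, 3, 4} : Finset (Fin 5)) = ({{{0}, {3}, {4}}, {{0}, {3, 4}}, {{0, 3}, {4}}, {{0, 4}, {3}}, {{0, 3, 4}}} : Finset (Finset (Finset (Fin 5)))) from by decide]
    simp (config := { decide := true }) only [Finset.sum_insert, Finset.sum_singleton,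
      Finset.mem_insert, Finset.mem_singleton, Finset.sum_empty, Finset.prod_insert, Finset.prod_singleton, Finset.prod_empty,
      show Nat.factorial (Finset.card ({{0}, {3}, {4}} : Finset (Finset (Fin 5))) - 1) = 2 from by decide,
      show Nat.factorial (Finset.card ({{0}, {3, 4}} : Finset (Finset (Fin 5))) - 1) = 1 from by decide,
      show Nat.factorial (Finset.card ({{0, 3}, {4}} : Finset (Finset (Fin 5))) - 1) = 1 from by decide,
      show Nat.factorial (Finset.card ({{0, 4}, {3}} : Finset (Finset (Fin 5))) - 1) = 1 from by decide,
      show Nat.factorial (Finset.card ({{0, 3, 4}} : Finset (Finset (Fin 5))) - 1) = 1 from by decide]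
    push_cast
    ring
  have hb_123 : bt5 x {1, 2, 3} = 2 * (x {1} * x {2} * x {3}) + 1 * (x {1} * x {2, 3}) + 1 * (x {1, 2} * x {3}) + 1 * (x {1, 3} * x {2}) + 1 * (x {1, 2, 3}) := by
    rw [bt5, hall, show myPartsF 5 ({1, 2, 3} : Finset (Fin 5)) = ({{{1}, {2}, {3}}, {{1}, {2, 3}}, {{1, 2}, {3}}, {{1, 3}, {2}}, {{1, 2, 3}}} : Finset (Finset (Finset (Fin 5)))) from by decide]
    simp (config := { decide := true }) only [Finset.sum_insert, Finset.sum_singleton,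
      Finset.mem_insert, Finset.mem_singleton, Finset.sum_empty, Finset.prod_insert, Finset.prod_singleton, Finset.prod_empty,
      show Nat.factorial (Finset.card ({{1}, {2}, {3}} : Finset (Finset (Fin 5))) - 1) = 2 from by decide,
      show Nat.factorial (Finset.card ({{1}, {2, 3}} : Finset (Finset (Fin 5))) - 1) = 1 from by decide,
      show Nat.factorial (Finset.card ({{1, 2}, {3}} : Finset (Finset (Fin 5))) - 1) = 1 from by decide,
      show Nat.factorial (Finset.card ({{1, 3}, {2}} : Finset (Finset (Fin 5))) - 1) = 1 from by decide,
      show Nat.factorial (Finset.card ({{1, 2, 3}} : Finset (Finset (Fin 5))) - 1) = 1 from by decide]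
    push_cast
    ring
  have hb_124 : bt5 x {1, 2, 4} = 2 * (x {1} * x {2} * x {4}) + 1 * (x {1} * x {2, 4}) + 1 * (x {1, 2} * x {4}) + 1 * (x {1, 4} * x {2}) + 1 * (x {1, 2, 4}) := by
    rw [bt5, hall, show myPartsF 5 ({1, 2, 4} : Finset (Fin 5)) = ({{{1}, {2}, {4}}, {{1}, {2, 4}}, {{1, 2}, {4}}, {{1, 4}, {2}}, {{1, 2, 4}}} : Finset (Finset (Finset (Fin 5)))) from by decide]
    simp (config := { decide := true }) only [Finset.sum_insert, Finset.sum_singleton,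
      Finset.mem_insert, Finset.mem_singleton, Finset.sum_empty, Finset.prod_insert, Finset.prod_singleton, Finset.prod_empty,
      show Nat.factorial (Finset.card ({{1}, {2}, {4}} : Finset (Finset (Fin 5))) - 1) = 2 from by decide,
      show Nat.factorial (Finset.card ({{1}, {2, 4}} : Finset (Finset (Fin 5))) - 1) = 1 from by decide,
      show Nat.factorial (Finset.card ({{1, 2}, {4}} : Finset (Finset (Fin 5))) - 1) = 1 from by decide,
      show Nat.factorial (Finset.card ({{1, 4}, {2}} : Finset (Finset (Fin 5))) - 1) = 1 from by decide,
      show Nat.factorial (Finset.card ({{1, 2, 4}} : Finset (Finset (Fin 5))) - 1) = 1 from by decide]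
    push_cast
    ring
  have hb_134 : bt5 x {1, 3, 4} = 2 * (x {1} * x {3} * x {4}) + 1 * (x {1} * x {3, 4}) + 1 * (x {1, 3} * x {4}) + 1 * (x {1, 4} * x {3}) + 1 * (x {1, 3, 4}) := by
    rw [bt5, hall, show myPartsF 5 ({1, 3, 4} : Finset (Fin 5)) = ({{{1}, {3}, {4}}, {{1}, {3, 4}}, {{1, 3}, {4}}, {{1, 4}, {3}}, {{1, 3, 4}}} : Finset (Finset (Finset (Fin 5)))) from by decide]
    simp (config := { decide := true }) only [Finset.sum_insert, Finset.sum_singleton,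
      Finset.mem_insert, Finset.mem_singleton, Finset.sum_empty, Finset.prod_insert, Finset.prod_singleton, Finset.prod_empty,
      show Nat.factorial (Finset.card ({{1}, {3}, {4}} : Finset (Finset (Fin 5))) - 1) = 2 from by decide,
      show Nat.factorial (Finset.card ({{1}, {3, 4}} : Finset (Finset (Fin 5))) - 1) = 1 from by decide,
      show Nat.factorial (Finset.card ({{1, 3}, {4}} : Finset (Finset (Fin 5))) - 1) = 1 from by decide,
      show Nat.factorial (Finset.card ({{1, 4}, {3}} : Finset (Finset (Fin 5))) - 1) = 1 from by decide,
      show Nat.factorial (Finset.card ({{1, 3, 4}} : Finset (Finset (Fin 5))) - 1) = 1 from by decide]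
    push_cast
    ring
  have hb_234 : bt5 x {2, 3, 4} = 2 * (x {2} * x {3} * x {4}) + 1 * (x {2} * x {3, 4}) + 1 * (x {2, 3} * x {4}) + 1 * (x {2, 4} * x {3}) + 1 * (x {2, 3, 4}) := by
    rw [bt5, hall, show myPartsF 5 ({2, 3, 4} : Finset (Fin 5)) = ({{{2}, {3}, {4}}, {{2}, {3, 4}}, {{2, 3}, {4}}, {{2, 4}, {3}}, {{2, 3, 4}}} : Finset (Finset (Finset (Fin 5)))) from by decide]
    simp (config := { decide := true }) only [Finset.sum_insert, Finset.sum_singleton,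
      Finset.mem_insert, Finset.mem_singleton, Finset.sum_empty, Finset.prod_insert, Finset.prod_singleton, Finset.prod_empty,
      show Nat.factorial (Finset.card ({{2}, {3}, {4}} : Finset (Finset (Fin 5))) - 1) = 2 from by decide,
      show Nat.factorial (Finset.card ({{2}, {3, 4}} : Finset (Finset (Fin 5))) - 1) = 1 from by decide,
      show Nat.factorial (Finset.card ({{2, 3}, {4}} : Finset (Finset (Fin 5))) - 1) = 1 from by decide,
      show Nat.factorial (Finset.card ({{2, 4}, {3}} : Finset (Finset (Fin 5))) - 1) = 1 from by decide,
      show Nat.factorial (Finset.card ({{2, 3, 4}} : Finset (Finset (Fin 5))) - 1) = 1 from by decide]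
    push_cast
    ring
  have hb_01 : bt5 x {0, 1} = 1 * (x {0} * x {1}) + 1 * (x {0, 1}) := by
    rw [bt5, hall, show myPartsF 5 ({0, 1} : Finset (Fin 5)) = ({{{0}, {1}}, {{0, 1}}} : Finset (Finset (Finset (Fin 5)))) from by decide]
    simp (config := { decide := true }) only [Finset.sum_insert, Finset.sum_singleton,
      Finset.mem_insert, Finset.mem_singleton, Finset.sum_empty, Finset.prod_insert, Finset.prod_singleton, Finset.prod_empty,
      show Nat.factorial (Finset.card ({{0}, {1}} : Finset (Finset (Fin 5))) - 1) = 1 from by decide,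
      show Nat.factorial (Finset.card ({{0, 1}} : Finset (Finset (Fin 5))) - 1) = 1 from by decide]
    push_cast
    ring
  have hb_02 : bt5 x {0, 2} = 1 * (x {0} * x {2}) + 1 * (x {0, 2}) := by
    rw [bt5, hall, show myPartsF 5 ({0, 2} : Finset (Fin 5)) = ({{{0}, {2}}, {{0, 2}}} : Finset (Finset (Finset (Fin 5)))) from by decide]
    simp (config := { decide := true }) only [Finset.sum_insert, Finset.sum_singleton,
      Finset.mem_insert, Finset.mem_singleton, Finset.sum_empty, Finset.prod_insert, Finset.prod_singleton, Finset.prod_empty,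
      show Nat.factorial (Finset.card ({{0}, {2}} : Finset (Finset (Fin 5))) - 1) = 1 from by decide,
      show Nat.factorial (Finset.card ({{0, 2}} : Finset (Finset (Fin 5))) - 1) = 1 from by decide]
    push_cast
    ring
  have hb_03 : bt5 x {0, 3} = 1 * (x {0} * x {3}) + 1 * (x {0, 3}) := by
    rw [bt5, hall, show myPartsF 5 ({0, 3} : Finset (Fin 5)) = ({{{0}, {3}}, {{0, 3}}} : Finset (Finset (Finset (Fin 5)))) from by decide]
    simp (config := { decide := true }) only [Finset.sum_insert, Finset.sum_singleton,
      Finset.mem_insert, Finset.mem_singleton, Finset.sum_empty, Finset.prod_insert, Finset.prod_singleton, Finset.prod_empty,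
      show Nat.factorial (Finset.card ({{0}, {3}} : Finset (Finset (Fin 5))) - 1) = 1 from by decide,
      show Nat.factorial (Finset.card ({{0, 3}} : Finset (Finset (Fin 5))) - 1) = 1 from by decide]
    push_cast
    ring
  have hb_04 : bt5 x {0, 4} = 1 * (x {0} * x {4}) + 1 * (x {0, 4}) := by
    rw [bt5, hall, show myPartsF 5 ({0, 4} : Finset (Fin 5)) = ({{{0}, {4}}, {{0, 4}}} : Finset (Finset (Finset (Fin 5)))) from by decide]
    simp (config := { decide := true }) only [Finset.sum_insert, Finset.sum_singleton,
      Finset.mem_insert, Finset.mem_singleton, Finset.sum_empty, Finset.prod_insert, Finset.prod_singleton, Finset.prod_empty,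
      show Nat.factorial (Finset.card ({{0}, {4}} : Finset (Finset (Fin 5))) - 1) = 1 from by decide,
      show Nat.factorial (Finset.card ({{0, 4}} : Finset (Finset (Fin 5))) - 1) = 1 from by decide]
    push_cast
    ring
  have hb_12 : bt5 x {1, 2} = 1 * (x {1} * x {2}) + 1 * (x {1, 2}) := by
    rw [bt5, hall, show myPartsF 5 ({1, 2} : Finset (Fin 5)) = ({{{1}, {2}}, {{1, 2}}} : Finset (Finset (Finset (Fin 5)))) from by decide]
    simp (config := { decide := true }) only [Finset.sum_insert, Finset.sum_singleton,
      Finset.mem_insert, Finset.mem_singleton, Finset.sum_empty, Finset.prod_insert, Finset.prod_singleton, Finset.prod_empty,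
      show Nat.factorial (Finset.card ({{1}, {2}} : Finset (Finset (Fin 5))) - 1) = 1 from by decide,
      show Nat.factorial (Finset.card ({{1, 2}} : Finset (Finset (Fin 5))) - 1) = 1 from by decide]
    push_cast
    ring
  have hb_13 : bt5 x {1, 3} = 1 * (x {1} * x {3}) + 1 * (x {1, 3}) := by
    rw [bt5, hall, show myPartsF 5 ({1, 3} : Finset (Fin 5)) = ({{{1}, {3}}, {{1, 3}}} : Finset (Finset (Finset (Fin 5)))) from by decide]
    simp (config := { decide := true }) only [Finset.sum_insert, Finset.sum_singleton,
      Finset.mem_insert, Finset.mem_singleton, Finset.sum_empty, Finset.prod_insert, Finset.prod_singleton, Finset.prod_empty,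
      show Nat.factorial (Finset.card ({{1}, {3}} : Finset (Finset (Fin 5))) - 1) = 1 from by decide,
      show Nat.factorial (Finset.card ({{1, 3}} : Finset (Finset (Fin 5))) - 1) = 1 from by decide]
    push_cast
    ring
  have hb_14 : bt5 x {1, 4} = 1 * (x {1} * x {4}) + 1 * (x {1, 4}) := by
    rw [bt5, hall, show myPartsF 5 ({1, 4} : Finset (Fin 5)) = ({{{1}, {4}}, {{1, 4}}} : Finset (Finset (Finset (Fin 5)))) from by decide]
    simp (config := { decide := true }) only [Finset.sum_insert, Finset.sum_singleton,
      Finset.mem_insert, Finset.mem_singleton, Finset.sum_empty, Finset.prod_insert, Finset.prod_singleton, Finset.prod_empty,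
      show Nat.factorial (Finset.card ({{1}, {4}} : Finset (Finset (Fin 5))) - 1) = 1 from by decide,
      show Nat.factorial (Finset.card ({{1, 4}} : Finset (Finset (Fin 5))) - 1) = 1 from by decide]
    push_cast
    ring
  have hb_23 : bt5 x {2, 3} = 1 * (x {2} * x {3}) + 1 * (x {2, 3}) := by
    rw [bt5, hall, show myPartsF 5 ({2, 3} : Finset (Fin 5)) = ({{{2}, {3}}, {{2, 3}}} : Finset (Finset (Finset (Fin 5)))) from by decide]
    simp (config := { decide := true }) only [Finset.sum_insert, Finset.sum_singleton,
      Finset.mem_insert, Finset.mem_singleton, Finset.sum_empty, Finset.prod_insert, Finset.prod_singleton, Finset.prod_empty,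
      show Nat.factorial (Finset.card ({{2}, {3}} : Finset (Finset (Fin 5))) - 1) = 1 from by decide,
      show Nat.factorial (Finset.card ({{2, 3}} : Finset (Finset (Fin 5))) - 1) = 1 from by decide]
    push_cast
    ring
  have hb_24 : bt5 x {2, 4} = 1 * (x {2} * x {4}) + 1 * (x {2, 4}) := by
    rw [bt5, hall, show myPartsF 5 ({2, 4} : Finset (Fin 5)) = ({{{2}, {4}}, {{2, 4}}} : Finset (Finset (Finset (Fin 5)))) from by decide]
    simp (config := { decide := true }) only [Finset.sum_insert, Finset.sum_singleton,
      Finset.mem_insert, Finset.mem_singleton, Finset.sum_empty, Finset.prod_insert, Finset.prod_singleton, Finset.prod_empty,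
      show Nat.factorial (Finset.card ({{2}, {4}} : Finset (Finset (Fin 5))) - 1) = 1 from by decide,
      show Nat.factorial (Finset.card ({{2, 4}} : Finset (Finset (Fin 5))) - 1) = 1 from by decide]
    push_cast
    ring
  have hb_34 : bt5 x {3, 4} = 1 * (x {3} * x {4}) + 1 * (x {3, 4}) := by
    rw [bt5, hall, show myPartsF 5 ({3, 4} : Finset (Fin 5)) = ({{{3}, {4}}, {{3, 4}}} : Finset (Finset (Finset (Fin 5)))) from by decide]
    simp (config := { decide := true }) only [Finset.sum_insert, Finset.sum_singleton,
      Finset.mem_insert, Finset.mem_singleton, Finset.sum_empty, Finset.prod_insert, Finset.prod_singleton, Finset.prod_empty,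
      show Nat.factorial (Finset.card ({{3}, {4}} : Finset (Finset (Fin 5))) - 1) = 1 from by decide,
      show Nat.factorial (Finset.card ({{3, 4}} : Finset (Finset (Fin 5))) - 1) = 1 from by decide]
    push_cast
    ring
  rw [h10, show (Finset.univ : Finset (Fin 5)).powerset = ({∅, {0}, {1}, {2}, {3}, {4}, {0, 1}, {0, 2}, {0, 3}, {0, 4}, {1, 2}, {1, 3}, {1, 4}, {2, 3}, {2, 4}, {3, 4}, {0, 1, 2}, {0, 1, 3}, {0, 1, 4}, {0, 2, 3}, {0, 2, 4}, {0, 3, 4}, {1, 2, 3}, {1, 2, 4}, {1, 3, 4}, {2, 3, 4}, {0, 1, 2, 3}, {0, 1, 2, 4}, {0, 1, 3, 4}, {0, 2, 3, 4}, {1, 2, 3, 4}, {0, 1, 2, 3, 4}} : Finset (Finset (Fin 5))) from by decide]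
  simp (config := { decide := true }) only [Finset.sum_insert, Finset.sum_singleton,
    Finset.mem_insert, Finset.mem_singleton, Finset.prod_insert, Finset.prod_singleton, Finset.prod_empty]
  simp only [hd0, hd1, hd2, hd3, hd4, hd5, hd6, hd7, hd8, hd9, hd10, hd11, hd12, hd13, hd14, hd15, hd16, hd17, hd18, hd19, hd20, hd21, hd22, hd23, hd24, hd25, hd26, hd27, hd28, hd29, hd30, hd31, hx]
  simp only [hb_univ, hb_012, hb_013, hb_014, hb_023, hb_024, hb_034, hb_123, hb_124, hb_134, hb_234, hb_01, hb_02, hb_03, hb_04, hb_12, hb_13, hb_14, hb_23, hb_24, hb_34]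
  ring

/-- For a five-element set `T ⊆ [n]`,
`r_T = b̃_T − ∑_{{U,V} partition of T, |U|=3, |V|=2} b̃_U b̃_V`. -/
theorem stmt_5 {n : ℕ} (p : Finset (Fin n) → ℝ) (h0 : p ∅ = 1) (hn : p Finset.univ ≠ 0)
    (T : Finset (Fin n)) (hT : T.card = 5) :
    rcoeff p T = btilde p T -
      ∑ P ∈ (setPartitions T).filter
          (fun P => ∃ U V : Finset (Fin n), P = {U, V} ∧ U.card = 3 ∧ V.card = 2),
        ∏ t ∈ P, btilde p t := by
  have h5 : 0 < n := by
    by_contra h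
    have : T = ∅ := Finset.eq_empty_of_forall_notMem (fun x _ => absurd x.2 (by omega))
    rw [this] at hT; simp at hT
  set f : Fin 5 → Fin n := fun i => T.orderEmbOfFin hT i with hfdef
  have hf : Function.Injective f := (T.orderEmbOfFin hT).injective
  have hTimg : (Finset.univ : Finset (Fin 5)).image f = T := by
    apply Finset.coe_injective
    rw [Finset.coe_image, Finset.coe_univ, Set.image_univ]
    exact Finset.range_orderEmbOfFin T hT
  set x : Finset (Fin 5) → ℝ := fun s => ptilde p (s.image f) with hxdef
  have hx0 : x ∅ = -1 := by
    simp only [hxdef, Finset.image_empty, ptilde, Finset.compl_empty]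
    rw [neg_div, div_self hn]
  have hL : ∑ U ∈ T.powerset, ptilde p (T \ U) * ∏ i ∈ U, ptilde p {i}
      = ∑ U ∈ (Finset.univ : Finset (Fin 5)).powerset,
          x (Finset.univ \ U) * ∏ i ∈ U, x {i} := by
    rw [← hTimg, powerset_image' f]
    rw [Finset.sum_image (fun a _ b _ h => Finset.image_injective hf h)]
    refine Finset.sum_congr rfl fun U hU => ?_
    rw [← Finset.image_sdiff Finset.univ U hf]
    rw [Finset.prod_image (fun a _ b _ h => hf h)]
    simp only [hxdef, Finset.image_singleton]
  have hbtT : btilde p T = bt5 x Finset.univ := by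
    rw [← hTimg, btilde_image f hf]
  have hR : ∑ U ∈ T.powerset.filter (fun U => U.card = 3),
        btilde p U * btilde p (T \ U)
      = ∑ U ∈ (Finset.univ : Finset (Fin 5)).powerset.filter (fun U => U.card = 3),
          bt5 x U * bt5 x (Finset.univ \ U) := by
    rw [← hTimg, powerset_image' f, Finset.filter_image]
    rw [Finset.sum_image (fun a _ b _ h => Finset.image_injective hf h)]
    apply Finset.sum_congr
    · apply Finset.filter_congr
      intro U hU
      rw [Finset.card_image_of_injective _ hf]
    · intro U hU
      rw [← Finset.image_sdiff Finset.univ U hf, btilde_image f hf, btilde_image f hf]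
  rw [rcoeff_eq, filter32 p T hT, hL, hbtT, hR]
  exact core5 x hx0
end

section
/- With S_i(θ_i)=1+(−p̃_i)^{−1}θ_i for i∈T⊆[n] and S_T defined by S_T = (1/p_{T̄})(∂/∂θ)^{T̄}P_n, the following decomposition holds: (−p̃)^T · ∏_{i∈T} S_i(θ_i) = (−p̃_T)·S_T(θ_T) + Σ_{T'⊆T, |T'|>1} r_{T'} · (−p̃)^{T∖T'} · ∏_{i∈T∖T'} S_i(θ_i), where r_{T'} = Σ_{U⊆T'} p̃_{T'∖U}·p̃^U and p̃^U := ∏_{i∈U} p̃_i. -/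
open Finset

lemma ptilde_empty {n : ℕ} (p : Finset (Fin n) → ℝ) (hp : ∀ S, p S ≠ 0) :
    ptilde p (∅ : Finset (Fin n)) = -1 := by
  simp [ptilde, div_self (hp _), neg_div]

lemma ptilde_single_ne {n : ℕ} (p : Finset (Fin n) → ℝ) (hp : ∀ S, p S ≠ 0) (i : Fin n) :
    ptilde p {i} ≠ 0 := by
  simp only [ptilde, neg_div, ne_eq, neg_eq_zero, div_eq_zero_iff, not_or]
  exact ⟨hp _, hp _⟩

/-- L0 : full powerset sum collapses to `ptilde p W`. -/
lemma key_sum {n : ℕ} (p : Finset (Fin n) → ℝ) (hp : ∀ S, p S ≠ 0) (W : Finset (Fin n)) :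
    ∑ T' ∈ W.powerset,
        (∑ U ∈ T'.powerset, ptilde p (T' \ U) * ∏ i ∈ U, ptilde p {i}) *
          ∏ i ∈ W \ T', (-ptilde p {i})
      = ptilde p W := by
  classical
  -- Step A : reflect inner sum U ↦ T' \ U and distribute the outer product
  have stepA : ∀ T' ∈ W.powerset,
      (∑ U ∈ T'.powerset, ptilde p (T' \ U) * ∏ i ∈ U, ptilde p {i}) *
          ∏ i ∈ W \ T', (-ptilde p {i})
        = ∑ V ∈ T'.powerset,
            ptilde p V * ((∏ i ∈ T' \ V, ptilde p {i}) * ∏ i ∈ W \ T', (-ptilde p {i})) := by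
    intro T' _
    rw [sum_mul]
    refine Finset.sum_nbij' (fun U => T' \ U) (fun V => T' \ V) ?_ ?_ ?_ ?_ ?_
    · intro a ha; exact mem_powerset.2 sdiff_subset
    · intro a ha; exact mem_powerset.2 sdiff_subset
    · intro a ha; exact Finset.sdiff_sdiff_eq_self (mem_powerset.1 ha)
    · intro a ha; exact Finset.sdiff_sdiff_eq_self (mem_powerset.1 ha)
    · intro a ha
      rw [Finset.sdiff_sdiff_eq_self (mem_powerset.1 ha)]
      ring
  rw [Finset.sum_congr rfl stepA]
  -- Step B : swap the two sums
  rw [Finset.sum_comm' (s' := fun V => W.powerset.filter (fun T' => V ⊆ T'))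
      (t' := W.powerset)
      (by
        intro T' V
        simp only [mem_powerset, mem_filter]
        constructor
        · rintro ⟨h1, h2⟩; exact ⟨⟨h1, h2⟩, h2.trans h1⟩
        · rintro ⟨⟨h1, h2⟩, _⟩; exact ⟨h1, h2⟩)]
  -- Step C : inner sum over T' ⊇ V collapses
  have stepC : ∀ V ∈ W.powerset,
      ∑ T' ∈ W.powerset.filter (fun T' => V ⊆ T'),
          ptilde p V * ((∏ i ∈ T' \ V, ptilde p {i}) * ∏ i ∈ W \ T', (-ptilde p {i}))
        = if V = W then ptilde p V else 0 := by
    intro V hV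
    have hVW : V ⊆ W := mem_powerset.1 hV
    rw [← mul_sum]
    have : ∑ T' ∈ W.powerset.filter (fun T' => V ⊆ T'),
        ((∏ i ∈ T' \ V, ptilde p {i}) * ∏ i ∈ W \ T', (-ptilde p {i}))
        = ∑ S ∈ (W \ V).powerset,
            ((∏ i ∈ S, ptilde p {i}) * ∏ i ∈ (W \ V) \ S, (-ptilde p {i})) := by
      refine Finset.sum_nbij' (fun T' => T' \ V) (fun S => V ∪ S) ?_ ?_ ?_ ?_ ?_
      · intro a ha
        simp only [mem_filter, mem_powerset] at ha
        exact mem_powerset.2 (sdiff_subset_sdiff ha.1 le_rfl)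
      · intro a ha
        simp only [mem_powerset] at ha
        refine mem_filter.2 ⟨mem_powerset.2 (union_subset hVW (ha.trans sdiff_subset)), subset_union_left⟩
      · intro a ha
        simp only [mem_filter, mem_powerset] at ha
        exact union_sdiff_of_subset ha.2
      · intro a ha
        simp only [mem_powerset] at ha
        exact union_sdiff_cancel_left ((Finset.sdiff_disjoint.mono_left ha).symm)
      · intro a ha
        simp only [mem_filter, mem_powerset] at ha
        have hWa : W \ a = (W \ V) \ (a \ V) := by
          ext x
          simp only [mem_sdiff]
          have hva := @ha.2 x
          tauto
        rw [hWa]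
    rw [this, ← Finset.prod_add]
    have hz : ∏ i ∈ W \ V, (ptilde p {i} + -ptilde p {i}) = if V = W then 1 else 0 := by
      simp only [add_neg_cancel]
      rcases eq_or_ne V W with h | h
      · simp [h]
      · have : (W \ V).Nonempty := by
          rw [sdiff_nonempty]
          intro hsub
          exact h (subset_antisymm hVW hsub)
        rw [Finset.prod_const, if_neg h, zero_pow]
        exact card_ne_zero_of_mem this.choose_spec
    rw [hz]
    split <;> simp
  rw [Finset.sum_congr rfl stepC, Finset.sum_ite_eq' W.powerset W (fun V => ptilde p V),
    if_pos (mem_powerset.2 le_rfl)]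

lemma key_filter {n : ℕ} (p : Finset (Fin n) → ℝ) (hp : ∀ S, p S ≠ 0) (W : Finset (Fin n)) :
    ∑ T' ∈ W.powerset.filter (fun T' => 1 < T'.card),
        (∑ U ∈ T'.powerset, ptilde p (T' \ U) * ∏ i ∈ U, ptilde p {i}) *
          ∏ i ∈ W \ T', (-ptilde p {i})
      = ptilde p W + ∏ i ∈ W, (-ptilde p {i}) := by
  classical
  have hsplit := Finset.sum_filter_add_sum_filter_not W.powerset (fun T' => 1 < T'.card)
    (fun T' => (∑ U ∈ T'.powerset, ptilde p (T' \ U) * ∏ i ∈ U, ptilde p {i}) *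
          ∏ i ∈ W \ T', (-ptilde p {i}))
  have hset : W.powerset.filter (fun T' => ¬ 1 < T'.card)
      = insert ∅ (W.image fun i => ({i} : Finset (Fin n))) := by
    ext S
    simp only [mem_filter, mem_powerset, mem_insert, mem_image, not_lt]
    constructor
    · rintro ⟨hS, hc⟩
      rcases Finset.eq_empty_or_nonempty S with h | ⟨a, ha⟩
      · exact Or.inl h
      · exact Or.inr ⟨a, hS ha, (Finset.eq_singleton_iff_unique_mem.2
          ⟨ha, fun x hx => Finset.card_le_one.1 hc x hx a ha⟩).symm⟩
    · rintro (rfl | ⟨a, haW, rfl⟩)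
      · simp
      · simp [haW]
  have hempty_notmem : (∅ : Finset (Fin n)) ∉ W.image fun i => ({i} : Finset (Fin n)) := by
    simp
  have hsmall : ∑ T' ∈ W.powerset.filter (fun T' => ¬ 1 < T'.card),
      (∑ U ∈ T'.powerset, ptilde p (T' \ U) * ∏ i ∈ U, ptilde p {i}) *
          ∏ i ∈ W \ T', (-ptilde p {i}) = -∏ i ∈ W, (-ptilde p {i}) := by
    rw [hset, Finset.sum_insert hempty_notmem, Finset.sum_image (by
      intro x _ y _ h
      exact Finset.singleton_injective h)]
    have h1 : ∀ i ∈ W, (∑ U ∈ ({i} : Finset (Fin n)).powerset,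
        ptilde p ({i} \ U) * ∏ j ∈ U, ptilde p {j}) *
          ∏ j ∈ W \ {i}, (-ptilde p {j}) = 0 := by
      intro i _
      have hps : ({i} : Finset (Fin n)).powerset = {∅, {i}} := by
        ext S
        simp [Finset.subset_singleton_iff]
      rw [hps, Finset.sum_pair (by
        intro h
        exact (Finset.singleton_ne_empty i) h.symm)]
      simp [ptilde_empty p hp]
    rw [Finset.sum_congr rfl h1]
    simp [ptilde_empty p hp]
  rw [← key_sum p hp W, ← hsplit, hsmall]
  ring

/-- Decomposition identity:  with `S_i(θᵢ) = 1 + (−p̃ᵢ)⁻¹θᵢ` and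
`S_T(θ_T) = (1/p_{T̄})(∂/∂θ)^{T̄}P_n = ∑_{U⊆T} (p_{T̄∪U}/p_{T̄}) θ^U`, one has
`(−p̃)^T ∏_{i∈T} S_i(θᵢ)
  = (−p̃_T) S_T(θ_T) + ∑_{T'⊆T, |T'|>1} r_{T'} (−p̃)^{T∖T'} ∏_{i∈T∖T'} S_i(θᵢ)`,
where `r_{T'} = ∑_{U⊆T'} p̃_{T'∖U} ∏_{i∈U} p̃ᵢ`. -/
theorem stmt_17 {n : ℕ} (p : Finset (Fin n) → ℝ) (h0 : p ∅ = 1) (hp : ∀ S, p S ≠ 0)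
    (T : Finset (Fin n)) (θ : Fin n → ℝ) :
    (∏ i ∈ T, (-ptilde p {i})) * ∏ i ∈ T, (1 + (-ptilde p {i})⁻¹ * θ i)
      = (-ptilde p T) * (∑ U ∈ T.powerset, (p (Tᶜ ∪ U) / p Tᶜ) * ∏ i ∈ U, θ i)
        + ∑ T' ∈ T.powerset.filter (fun T' => 1 < T'.card),
            (∑ U ∈ T'.powerset, ptilde p (T' \ U) * ∏ i ∈ U, ptilde p {i}) *
              ((∏ i ∈ T \ T', (-ptilde p {i})) *
                ∏ i ∈ T \ T', (1 + (-ptilde p {i})⁻¹ * θ i)) := by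
  classical
  -- expand products of the form (∏ b)(∏ (1 + b⁻¹θ)) into sums over subsets
  have hb : ∀ i : Fin n, (-ptilde p {i}) ≠ 0 := fun i =>
    neg_ne_zero.2 (ptilde_single_ne p hp i)
  have hexp : ∀ S : Finset (Fin n),
      (∏ i ∈ S, (-ptilde p {i})) * ∏ i ∈ S, (1 + (-ptilde p {i})⁻¹ * θ i)
        = ∑ U ∈ S.powerset, (∏ i ∈ U, θ i) * ∏ i ∈ S \ U, (-ptilde p {i}) := by
    intro S
    rw [← Finset.prod_mul_distrib, ← Finset.prod_add]
    refine Finset.prod_congr rfl fun i _ => ?_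
    field_simp [ptilde_single_ne p hp i]
    ring
  rw [hexp T]
  have hexp2 : ∀ T' ∈ T.powerset.filter (fun T' => 1 < T'.card),
      (∑ U ∈ T'.powerset, ptilde p (T' \ U) * ∏ i ∈ U, ptilde p {i}) *
              ((∏ i ∈ T \ T', (-ptilde p {i})) *
                ∏ i ∈ T \ T', (1 + (-ptilde p {i})⁻¹ * θ i))
        = ∑ U ∈ (T \ T').powerset,
            (∑ V ∈ T'.powerset, ptilde p (T' \ V) * ∏ i ∈ V, ptilde p {i}) *
              ((∏ i ∈ U, θ i) * ∏ i ∈ (T \ T') \ U, (-ptilde p {i})) := by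
    intro T' _
    rw [hexp (T \ T'), Finset.mul_sum]
  rw [Finset.sum_congr rfl hexp2]
  -- swap the double sum
  rw [Finset.sum_comm' (s' := fun U => (T \ U).powerset.filter (fun T' => 1 < T'.card))
      (t' := T.powerset)
      (by
        intro T' U
        simp only [mem_filter, mem_powerset, Finset.subset_sdiff]
        constructor
        · rintro ⟨⟨h1, h2⟩, h3, h4⟩
          exact ⟨⟨⟨h1, h4.symm⟩, h2⟩, h3⟩
        · rintro ⟨⟨⟨h1, h2⟩, h3⟩, h4⟩
          exact ⟨⟨h1, h3⟩, h4, h2.symm⟩)]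
  -- first term distributed
  rw [Finset.mul_sum, ← Finset.sum_add_distrib]
  refine Finset.sum_congr rfl fun U hU => ?_
  have hUT : U ⊆ T := mem_powerset.1 hU
  -- rewrite (T \ T') \ U as (T \ U) \ T' inside the inner sum
  have hswap : ∀ T' ∈ (T \ U).powerset.filter (fun T' => 1 < T'.card),
      (∑ V ∈ T'.powerset, ptilde p (T' \ V) * ∏ i ∈ V, ptilde p {i}) *
          ((∏ i ∈ U, θ i) * ∏ i ∈ (T \ T') \ U, (-ptilde p {i}))
        = ((∑ V ∈ T'.powerset, ptilde p (T' \ V) * ∏ i ∈ V, ptilde p {i}) *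
            ∏ i ∈ (T \ U) \ T', (-ptilde p {i})) * ∏ i ∈ U, θ i := by
    intro T' _
    rw [sdiff_right_comm]
    ring
  rw [Finset.sum_congr rfl hswap, ← Finset.sum_mul, key_filter p hp (T \ U)]
  -- now pure scalar identity
  have hcompl : (T \ U)ᶜ = Tᶜ ∪ U := by
    ext x
    simp only [mem_compl, mem_sdiff, mem_union, not_and, not_not]
    constructor
    · intro h
      by_cases hx : x ∈ T
      · exact Or.inr (h hx)
      · exact Or.inl (by simpa using hx)
    · intro h hxT
      rcases h with h | h
      · exact absurd hxT (by simpa using h)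
      · exact h
  have hfirst : -ptilde p T * (p (Tᶜ ∪ U) / p Tᶜ) = -ptilde p (T \ U) := by
    rw [ptilde, ptilde, hcompl]
    field_simp [hp Tᶜ, hp Finset.univ]
  rw [← mul_assoc, hfirst]
  ring
end
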